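/- For distinct reals a and b, the difference quotient α(a,b) := (μ(b) - μ(a))/(b - a) satisfies μ'(a)·(1 - e^{-|b-a|})/|b-a| ≤ α(a,b) ≤ μ'(a)·(e^{|b-a|} - 1)/|b-a|. -/

import Mathlib

noncomputable def logistic (z : ℝ) : ℝ := 1 / (1 + Real.exp (-z))

/-! The logistic function is Mathlib's `Real.sigmoid`, and `σ' x = σ x * σ (-x)`. Since `σ` is
increasing and `σ y ≤ σ x * exp (y - x)` for `x ≤ y`, the function `log σ'` is `1`-Lipschitz:
`σ' a * exp (-|x - a|) ≤ σ' x ≤ σ' a * exp |x - a|`. Integrating these bounds from `a` to `b`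
(by comparing derivatives) bounds `σ b - σ a`; the case `b < a` reduces to `a < b` through the
symmetry `σ (-x) = 1 - σ x`. -/

open Real Set

lemma logistic_eq_sigmoid : logistic = sigmoid := by
  funext z
  rw [logistic, sigmoid_def, one_div]

theorem sub_le_sub_of_hasDerivAt_le {f g f' g' : ℝ → ℝ} {a b : ℝ} (hab : a ≤ b)
    (hf : ∀ x, HasDerivAt f (f' x) x) (hg : ∀ x, HasDerivAt g (g' x) x)
    (hle : ∀ x ∈ Icc a b, f' x ≤ g' x) : f b - f a ≤ g b - g a := by
  have hmono : MonotoneOn (fun x => g x - f x) (Icc a b) := by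
    refine monotoneOn_of_hasDerivWithinAt_nonneg (convex_Icc a b)
      (fun x _ => ((hg x).sub (hf x)).continuousAt.continuousWithinAt)
      (fun x _ => ((hg x).sub (hf x)).hasDerivWithinAt) fun x hx => ?_
    exact sub_nonneg.2 (hle x (interior_subset hx))
  have := hmono (left_mem_Icc.2 hab) (right_mem_Icc.2 hab) hab
  linarith

namespace Real

lemma sigmoid_le_sigmoid_mul_exp_sub {x y : ℝ} (hxy : x ≤ y) :
    sigmoid y ≤ sigmoid x * exp (y - x) := by
  have hone : 1 ≤ exp (y - x) := one_le_exp (by linarith)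
  rw [sigmoid_def, sigmoid_def]
  field_simp
  calc 1 + exp (-x) ≤ exp (y - x) + exp (-x) := by linarith
    _ = (1 + exp (-y)) * exp (y - x) := by rw [add_mul, one_mul, ← exp_add]; ring_nf

lemma deriv_sigmoid_eq_mul_sigmoid_neg (x : ℝ) : deriv sigmoid x = sigmoid x * sigmoid (-x) := by
  rw [deriv_sigmoid, sigmoid_neg]

lemma deriv_sigmoid_neg (x : ℝ) : deriv sigmoid (-x) = deriv sigmoid x := by
  rw [deriv_sigmoid_eq_mul_sigmoid_neg, deriv_sigmoid_eq_mul_sigmoid_neg, neg_neg, mul_comm]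

lemma deriv_sigmoid_le_mul_exp_abs (x a : ℝ) :
    deriv sigmoid x ≤ deriv sigmoid a * exp |x - a| := by
  rw [deriv_sigmoid_eq_mul_sigmoid_neg, deriv_sigmoid_eq_mul_sigmoid_neg]
  rcases le_total a x with h | h
  · rw [abs_of_nonneg (sub_nonneg.2 h)]
    calc sigmoid x * sigmoid (-x) ≤ sigmoid a * exp (x - a) * sigmoid (-a) :=
          mul_le_mul (sigmoid_le_sigmoid_mul_exp_sub h) (sigmoid_le (neg_le_neg h))
            (sigmoid_pos _).le (mul_pos (sigmoid_pos a) (exp_pos _)).le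
      _ = sigmoid a * sigmoid (-a) * exp (x - a) := by ring
  · rw [abs_of_nonpos (sub_nonpos.2 h)]
    calc sigmoid x * sigmoid (-x) ≤ sigmoid a * (sigmoid (-a) * exp (-x - -a)) :=
          mul_le_mul (sigmoid_le h) (sigmoid_le_sigmoid_mul_exp_sub (neg_le_neg h))
            (sigmoid_pos _).le (sigmoid_pos a).le
      _ = sigmoid a * sigmoid (-a) * exp (-(x - a)) := by ring_nf

lemma deriv_sigmoid_mul_exp_neg_abs_le (x a : ℝ) :
    deriv sigmoid a * exp (-|x - a|) ≤ deriv sigmoid x := by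
  calc deriv sigmoid a * exp (-|x - a|)
      ≤ deriv sigmoid x * exp |a - x| * exp (-|x - a|) := by
        gcongr
        exact deriv_sigmoid_le_mul_exp_abs a x
    _ = deriv sigmoid x := by
        rw [abs_sub_comm, mul_assoc, ← exp_add, add_neg_cancel, exp_zero, mul_one]

lemma sigmoid_sub_le_of_le {a b : ℝ} (hab : a ≤ b) :
    sigmoid b - sigmoid a ≤ deriv sigmoid a * (exp (b - a) - 1) := by
  have hg : ∀ x, HasDerivAt (fun x => deriv sigmoid a * exp (x - a))
      (deriv sigmoid a * exp (x - a)) x := fun x => by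
    simpa using (((hasDerivAt_id x).sub_const a).exp).const_mul (deriv sigmoid a)
  have := sub_le_sub_of_hasDerivAt_le hab (fun x => differentiable_sigmoid x |>.hasDerivAt) hg
    fun x hx => by
      simpa [abs_of_nonneg (sub_nonneg.2 hx.1)] using deriv_sigmoid_le_mul_exp_abs x a
  simpa [mul_sub] using this

lemma mul_one_sub_exp_neg_le_sigmoid_sub {a b : ℝ} (hab : a ≤ b) :
    deriv sigmoid a * (1 - exp (-(b - a))) ≤ sigmoid b - sigmoid a := by
  have hg : ∀ x, HasDerivAt (fun x => -(deriv sigmoid a * exp (-(x - a))))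
      (deriv sigmoid a * exp (-(x - a))) x := fun x => by
    simpa using ((((hasDerivAt_id x).sub_const a).neg.exp).const_mul (deriv sigmoid a)).fun_neg
  have := sub_le_sub_of_hasDerivAt_le hab hg (fun x => differentiable_sigmoid x |>.hasDerivAt)
    fun x hx => by
      simpa [abs_of_nonneg (sub_nonneg.2 hx.1)] using deriv_sigmoid_mul_exp_neg_abs_le x a
  simp only [sub_self, neg_zero, exp_zero, mul_one] at this
  linarith

lemma sigmoid_slope_mem_Icc_of_lt {a b : ℝ} (hab : a < b) :
    (sigmoid b - sigmoid a) / (b - a) ∈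
      Icc (deriv sigmoid a * (1 - exp (-(b - a))) / (b - a))
        (deriv sigmoid a * (exp (b - a) - 1) / (b - a)) := by
  have hpos : 0 < b - a := sub_pos.2 hab
  exact ⟨div_le_div_of_nonneg_right (mul_one_sub_exp_neg_le_sigmoid_sub hab.le) hpos.le,
    div_le_div_of_nonneg_right (sigmoid_sub_le_of_le hab.le) hpos.le⟩

end Real

theorem stmt_6 (a b : ℝ) (hab : a ≠ b) :
    deriv logistic a * (1 - Real.exp (-|b - a|)) / |b - a|
      ≤ (logistic b - logistic a) / (b - a) ∧
    (logistic b - logistic a) / (b - a)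
      ≤ deriv logistic a * (Real.exp |b - a| - 1) / |b - a| := by
  rw [logistic_eq_sigmoid]
  rcases hab.lt_or_gt with h | h
  · rw [abs_of_pos (sub_pos.2 h)]
    exact sigmoid_slope_mem_Icc_of_lt h
  · have hslope :
        (sigmoid (-b) - sigmoid (-a)) / (-b - -a) = (sigmoid b - sigmoid a) / (b - a) := by
      rw [sigmoid_neg, sigmoid_neg, ← neg_div_neg_eq]
      ring_nf
    rw [abs_of_neg (sub_neg.2 h), neg_sub', ← hslope, ← deriv_sigmoid_neg]
    exact sigmoid_slope_mem_Icc_of_lt (neg_lt_neg h)
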